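/- arXiv:2405.00082 — 3 statements merged into one kernel-verified Lean document; each statement's English description precedes it below -/
import Mathlib

section
/- First-order approximation of conjugation by a time evolution (Lemma 3.3). Let H, X ∈ ℂ^{N×N} with H Hermitian, and let t ∈ ℝ. Then ‖e^{iHt} X e^{−iHt} − (X + [iHt, X])‖_F ≤ (t²/2)·‖[H,[H,X]]‖_F. -/
/-!
With `A = iH` skew-Hermitian, `f s = e^{sA} X e^{-sA}` has derivative `e^{sA} [A, X] e^{-sA}`, and
conjugation by the unitary `e^{sA}` preserves the Frobenius norm. The mean value inequality applied
to `s ↦ e^{sA} [A, X] e^{-sA}` gives `‖f' s - [A, X]‖ ≤ |s| ‖[A, [A, X]]‖`, and comparing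
`f s - X - s [A, X]` with `s ↦ s² ‖[A, [A, X]]‖ / 2` gives the bound; `[A, [A, X]] = -[H, [H, X]]`.
-/

open Complex Matrix
open scoped BigOperators

noncomputable section

/-- Commutator `[A, B] = A*B - B*A`. -/
def cm {α : Type*} [Ring α] (A B : α) : α := A * B - B * A

/-- Frobenius norm of a complex square matrix. -/
def frobNorm {m : Type*} [Fintype m] (M : Matrix m m ℂ) : ℝ :=
  Real.sqrt (∑ x, ∑ y, ‖M x y‖ ^ 2)

/-- Matrix exponential. -/
def mexp {m : Type*} [Fintype m] [DecidableEq m] (M : Matrix m m ℂ) : Matrix m m ℂ :=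
  NormedSpace.exp M

lemma cm_smul_left {R α : Type*} [Monoid R] [Ring α] [DistribMulAction R α] [IsScalarTower R α α]
    [SMulCommClass R α α] (c : R) (A B : α) : cm (c • A) B = c • cm A B := by
  simp only [cm, smul_mul_assoc, mul_smul_comm, smul_sub]

lemma cm_smul_right {R α : Type*} [Monoid R] [Ring α] [DistribMulAction R α]
    [IsScalarTower R α α] [SMulCommClass R α α] (c : R) (A B : α) : cm A (c • B) = c • cm A B := by
  simp only [cm, smul_mul_assoc, mul_smul_comm, smul_sub]

section

variable {𝔸 : Type*} [NormedRing 𝔸] [NormedAlgebra ℝ 𝔸] [CompleteSpace 𝔸]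

open NormedSpace

lemma hasDerivAt_conj_exp_smul (A Y : 𝔸) (s : ℝ) :
    HasDerivAt (fun u : ℝ => exp (u • A) * Y * exp ((-u) • A))
      (exp (s • A) * cm A Y * exp ((-s) • A)) s := by
  have hleft := (hasDerivAt_exp_smul_const A s).mul_const Y
  have hright : HasDerivAt (fun u : ℝ => exp ((-u) • A)) (-A * exp ((-s) • A)) s := by
    simpa only [smul_neg, neg_smul] using hasDerivAt_exp_smul_const' (-A) s
  refine (hleft.mul hright).congr_deriv ?_
  unfold cm
  noncomm_ring

lemma norm_le_half_mul_sq_of_norm_deriv_le_mul_abs {E : Type*} [NormedAddCommGroup E]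
    [NormedSpace ℝ E] {f f' : ℝ → E} {C : ℝ} (hf : ∀ s, HasDerivAt f (f' s) s) (hf0 : f 0 = 0)
    (bound : ∀ s, ‖f' s‖ ≤ C * |s|) (t : ℝ) : ‖f t‖ ≤ C / 2 * t ^ 2 := by
  wlog ht : 0 ≤ t generalizing f f' t
  · have hneg := this (f := fun s => f (-s)) (f' := fun s => -f' (-s))
      (fun s => by simpa [Function.comp_def] using (hf (-s)).scomp s (hasDerivAt_neg s))
      (by simpa using hf0)
      (fun s => by simpa using bound (-s)) (-t) (by linarith)
    simpa using hneg
  refine image_norm_le_of_norm_deriv_right_le_deriv_boundary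
    (B := fun s => C / 2 * s ^ 2) (B' := fun s => C * s)
    (fun s _ => (hf s).continuousAt.continuousWithinAt) (fun s _ => (hf s).hasDerivWithinAt)
    (by simp [hf0]) (fun s => ?_) (fun s hs => ?_) ⟨ht, le_rfl⟩
  · refine ((hasDerivAt_pow 2 s).const_mul (C / 2)).congr_deriv ?_
    ring
  · simpa [abs_of_nonneg hs.1] using bound s

lemma norm_conj_exp_smul_sub_le {A : 𝔸}
    (hA : ∀ (s : ℝ) (Z : 𝔸), ‖exp (s • A) * Z * exp ((-s) • A)‖ ≤ ‖Z‖) (Y : 𝔸) (s : ℝ) :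
    ‖exp (s • A) * Y * exp ((-s) • A) - Y‖ ≤ ‖cm A Y‖ * |s| := by
  have h := convex_univ.norm_image_sub_le_of_norm_hasDerivWithin_le
    (fun u _ => (hasDerivAt_conj_exp_smul A Y u).hasDerivWithinAt)
    (fun u _ => hA u (cm A Y)) (Set.mem_univ 0) (Set.mem_univ s)
  simpa using h

lemma norm_conj_exp_smul_sub_sub_le {A : 𝔸}
    (hA : ∀ (s : ℝ) (Z : 𝔸), ‖exp (s • A) * Z * exp ((-s) • A)‖ ≤ ‖Z‖) (X : 𝔸) (t : ℝ) :
    ‖exp (t • A) * X * exp ((-t) • A) - X - t • cm A X‖ ≤ t ^ 2 / 2 * ‖cm A (cm A X)‖ := by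
  have hderiv (s : ℝ) : HasDerivAt (fun u : ℝ => exp (u • A) * X * exp ((-u) • A) - X - u • cm A X)
      (exp (s • A) * cm A X * exp ((-s) • A) - cm A X) s := by
    have h := ((hasDerivAt_conj_exp_smul A X s).sub_const X).sub
      ((hasDerivAt_id s).smul_const (cm A X))
    rwa [one_smul] at h
  have h := norm_le_half_mul_sq_of_norm_deriv_le_mul_abs hderiv (by simp)
    (norm_conj_exp_smul_sub_le hA (cm A X)) t
  linarith

end

namespace Matrix

open NormedSpace

attribute [local instance] frobeniusNormedAddCommGroup frobeniusNormedRing frobeniusNormedAlgebra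

variable {𝕜 m n : Type*} [RCLike 𝕜] [Fintype m] [Fintype n]

lemma frobenius_norm_eq_sqrt (A : Matrix m n 𝕜) : ‖A‖ = √(∑ i, ∑ j, ‖A i j‖ ^ 2) := by
  simp only [frobenius_norm_def, Real.sqrt_eq_rpow, ← Real.rpow_natCast, Nat.cast_ofNat]

lemma frobenius_norm_sq_eq_re_trace (A : Matrix m n 𝕜) :
    ‖A‖ ^ 2 = RCLike.re (trace (Aᴴ * A)) := by
  rw [frobenius_norm_eq_sqrt, Real.sq_sqrt (by positivity), Finset.sum_comm]
  simp only [trace, diag, mul_apply, conjTranspose_apply, map_sum, RCLike.star_def,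
    RCLike.conj_mul]
  norm_cast

lemma frobenius_norm_unitary_mul [DecidableEq m] {U : Matrix m m 𝕜}
    (hU : U ∈ unitary (Matrix m m 𝕜)) (A : Matrix m n 𝕜) : ‖U * A‖ = ‖A‖ := by
  have htrace : (U * A)ᴴ * (U * A) = Aᴴ * A := by
    rw [conjTranspose_mul, Matrix.mul_assoc, ← Matrix.mul_assoc Uᴴ, ← star_eq_conjTranspose,
      Unitary.star_mul_self_of_mem hU, Matrix.one_mul]
  rw [← sq_eq_sq₀ (norm_nonneg _) (norm_nonneg _), frobenius_norm_sq_eq_re_trace,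
    frobenius_norm_sq_eq_re_trace, htrace]

lemma frobenius_norm_mul_unitary [DecidableEq n] {U : Matrix n n 𝕜}
    (hU : U ∈ unitary (Matrix n n 𝕜)) (A : Matrix m n 𝕜) : ‖A * U‖ = ‖A‖ := by
  rw [← frobenius_norm_conjTranspose, conjTranspose_mul, ← star_eq_conjTranspose,
    frobenius_norm_unitary_mul (Unitary.star_mem hU), frobenius_norm_conjTranspose]

lemma frobenius_norm_conj_exp_smul [DecidableEq m] {A : Matrix m m 𝕜} (hA : Aᴴ = -A) (s : ℝ)
    (Z : Matrix m m 𝕜) : ‖exp (s • A) * Z * exp ((-s) • A)‖ = ‖Z‖ := by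
  have hskew : s • A ∈ skewAdjoint (Matrix m m 𝕜) := by
    rw [skewAdjoint.mem_iff, star_eq_conjTranspose, conjTranspose_smul, hA, star_trivial, smul_neg]
  rw [neg_smul]
  exact (frobenius_norm_mul_unitary (exp_mem_unitary_of_mem_skewAdjoint (neg_mem hskew)) _).trans
    (frobenius_norm_unitary_mul (exp_mem_unitary_of_mem_skewAdjoint hskew) Z)

end Matrix

attribute [local instance] Matrix.frobeniusNormedAddCommGroup Matrix.frobeniusNormedRing
  Matrix.frobeniusNormedAlgebra

lemma frobNorm_eq_norm {m : Type*} [Fintype m] (M : Matrix m m ℂ) : frobNorm M = ‖M‖ :=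
  (Matrix.frobenius_norm_eq_sqrt M).symm

/-- Lemma 3.3: first-order approximation of conjugation by a time
evolution: `‖e^{iHt} X e^{−iHt} − (X + [iHt, X])‖_F ≤ (t²/2)·‖[H,[H,X]]‖_F`. -/
theorem first_order_approx {N : ℕ} (H X : Matrix (Fin N) (Fin N) ℂ)
    (hH : H.IsHermitian) (t : ℝ) :
    frobNorm (mexp ((Complex.I * (t : ℂ)) • H) * X * mexp ((-(Complex.I * (t : ℂ))) • H)
        - (X + cm ((Complex.I * (t : ℂ)) • H) X))
      ≤ t ^ 2 / 2 * frobNorm (cm H (cm H X)) := by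
  have hskew : (I • H)ᴴ = -(I • H) := by
    rw [conjTranspose_smul, hH.eq, star_def, conj_I, neg_smul]
  have hscale (s : ℝ) : (I * s) • H = s • (I • H) := by
    rw [mul_comm, ← smul_smul, Complex.coe_smul]
  have hcm : cm (I • H) (cm (I • H) X) = -cm H (cm H X) := by
    rw [cm_smul_left, cm_smul_left, cm_smul_right, smul_smul, I_mul_I, neg_one_smul]
  have key := norm_conj_exp_smul_sub_sub_le
    (fun s Z => (Matrix.frobenius_norm_conj_exp_smul hskew s Z).le) X t
  rw [frobNorm_eq_norm, frobNorm_eq_norm, mexp, mexp, ← mul_neg, ← ofReal_neg, hscale, hscale,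
    cm_smul_left, ← sub_sub]
  rwa [hcm, norm_neg] at key

end
end

section
/- Pauli pattern counting (Lemma 3.4). For X ∈ 𝒫 let 𝒮_X = {(P,Q) ∈ 𝒫_k × 𝒫_{k'} : [P,Q] = 2iX or [P,Q] = −2iX}, and define the pattern of (P,Q) ∈ 𝒮_X as the pair of sets (supp(P) ∩ supp(X), supp(Q) ∩ supp(X)); let 𝒮_X[S,T] denote the set of elements of 𝒮_X whose pattern is (S,T). Then: (a) for every X ∈ 𝒫, the set of patterns occurring among elements of 𝒮_X has at most (2(k+k'))^k elements; (b) for every pair (P,Q) ∈ 𝒫_k × 𝒫_{k'}, the number of triples (Y,S,T) with Y ∈ 𝒫 such that the class 𝒮_Y[S,T] contains both a pair whose first component is P and a pair whose second component is Q is at most (4(k+k'))^k; moreover if supp(P) ∩ supp(Q) = ∅ there are no such triples. -/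
open Complex Matrix
open scoped BigOperators Classical

noncomputable section

/-- The space of `n`-qubit operators, as matrices indexed by bit-strings. -/
abbrev QMat (n : ℕ) := Matrix (Fin n → Fin 2) (Fin n → Fin 2) ℂ

/-- The single-qubit Pauli matrices, indexed so that `0 = σ_I`, `1 = σ_x`, `2 = σ_y`,
`3 = σ_z`. -/
def pauli1 (a : Fin 4) : Matrix (Fin 2) (Fin 2) ℂ :=
  if a = 0 then 1
  else if a = 1 then !![0, 1; 1, 0]
  else if a = 2 then !![0, -Complex.I; Complex.I, 0]
  else !![1, 0; 0, -1]

/-- The `n`-qubit Pauli (Kronecker product of single-qubit Paulis) described by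
`p : Fin n → Fin 4`. -/
def PauliOp {n : ℕ} (p : Fin n → Fin 4) : QMat n :=
  Matrix.of fun x y => ∏ i, pauli1 (p i) (x i) (y i)

/-- The support of a Pauli: the set of qubits where it acts non-trivially. -/
def psupp {n : ℕ} (p : Fin n → Fin 4) : Finset (Fin n) :=
  Finset.univ.filter fun i => p i ≠ 0

/-- The coefficient of the Pauli `p` in the Pauli expansion `M = Σ_Q c_Q Q`. -/
def pauliCoeff {n : ℕ} (M : QMat n) (p : Fin n → Fin 4) : ℂ :=
  Matrix.trace (M * PauliOp p) / (2 ^ n : ℂ)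

/-- The local norm `‖M‖₍₁₎ = max_i Σ_{Q : i ∈ supp(Q)} |c_Q|`. -/
def lonorm {n : ℕ} (M : QMat n) : ℝ :=
  ⨆ i : Fin n, ∑ p : Fin n → Fin 4,
    if i ∈ psupp p then ‖pauliCoeff M p‖ else 0

/-- The local norm `‖M‖₍₂₎ = max_i (Σ_{Q : i ∈ supp(Q)} |c_Q|²)^{1/2}`. -/
def ltnorm {n : ℕ} (M : QMat n) : ℝ :=
  ⨆ i : Fin n, Real.sqrt (∑ p : Fin n → Fin 4,
    if i ∈ psupp p then ‖pauliCoeff M p‖ ^ 2 else 0)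

/-- `H` is the Hamiltonian `Σ_a λ_a E_a` with distinct non-identity Pauli terms. -/
def IsHamiltonian {n m : ℕ} (lam : Fin m → ℝ) (E : Fin m → Fin n → Fin 4) (H : QMat n) : Prop :=
  Function.Injective E ∧ (∀ a, E a ≠ fun _ => 0) ∧ H = ∑ a, (lam a : ℂ) • PauliOp (E a)

/-- Every term of the Hamiltonian has support of size at most `k`. -/
def KLocal {n m : ℕ} (E : Fin m → Fin n → Fin 4) (k : ℕ) : Prop :=
  ∀ a, (psupp (E a)).card ≤ k

/-- `[P, Q] = 2iX` or `[P, Q] = −2iX` (as matrices). -/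
def inCommClass {n : ℕ} (X P Q : Fin n → Fin 4) : Prop :=
  cm (PauliOp P) (PauliOp Q) = ((2 : ℂ) * Complex.I) • PauliOp X ∨
  cm (PauliOp P) (PauliOp Q) = (-((2 : ℂ) * Complex.I)) • PauliOp X

/-- `𝒮_X`: the pairs `(P,Q) ∈ 𝒫_k × 𝒫_{k'}` with `[P,Q] = ±2iX`. -/
def SX (n k k' : ℕ) (X : Fin n → Fin 4) : Finset ((Fin n → Fin 4) × (Fin n → Fin 4)) :=
  Finset.univ.filter fun PQ =>
    (psupp PQ.1).card ≤ k ∧ (psupp PQ.2).card ≤ k' ∧ inCommClass X PQ.1 PQ.2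

/-- The pattern of the pair `(P,Q)` relative to `X`:
`(supp(P) ∩ supp(X), supp(Q) ∩ supp(X))`. -/
def patternOf {n : ℕ} (X : Fin n → Fin 4) (PQ : (Fin n → Fin 4) × (Fin n → Fin 4)) :
    Finset (Fin n) × Finset (Fin n) :=
  (psupp PQ.1 ∩ psupp X, psupp PQ.2 ∩ psupp X)

/-- The triples `(Y, S, T)` such that the class `𝒮_Y[S,T]` contains both a pair with first
component `P` and a pair with second component `Q`. -/
def relevantClasses (n k k' : ℕ) (P Q : Fin n → Fin 4) :
    Finset ((Fin n → Fin 4) × Finset (Fin n) × Finset (Fin n)) :=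
  Finset.univ.filter fun YST =>
    (∃ R, (P, R) ∈ SX n k k' YST.1 ∧ patternOf YST.1 (P, R) = (YST.2.1, YST.2.2)) ∧
    (∃ R', (R', Q) ∈ SX n k k' YST.1 ∧ patternOf YST.1 (R', Q) = (YST.2.1, YST.2.2))

/-!
Multiplying Paulis site by site shows that `[P, Q]` is either `0` or `±2i` times the Pauli
`X = P·Q` whose label at each site is the product of the labels of `P` and `Q`. Hence a
pattern `(S, T)` of `X` covers `supp X`; it is determined by `S` together with the bits
`i ∈ T` for `i ∈ S`, a subset of size at most `k` of `supp X × Bool`. When `supp X` has the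
maximal size `k + k'`, `S` and `T` are disjoint and all bits are `false`, which saves the
factor needed for `(2(k + k'))^k`.

For (b), fix a witness `(R', Q) ∈ 𝒮_Y[S, T]`. Then `Y = R'·Q` agrees with `Q` on `T \ S`,
and `R'` is supported on `S` as well as on `supp Q \ T`. So `(Y, S, T)` is determined by the
graph of `Y` on `S ⊆ supp P` together with `supp Q \ T`, a set of total size at most `k`
inside `(supp P × Fin 4) ⊕ supp Q`. If `supp P` and `supp Q` are disjoint, `R'` and `Q`
commute site by site, so no witness exists.
-/

open Finset

section Counting

variable {α β : Type*} [DecidableEq α]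

theorem card_filter_powerset_card_le (B : Finset α) (k : ℕ) :
    #(B.powerset.filter fun s => #s ≤ k) ≤ (#B + 1) ^ k := by
  calc #(B.powerset.filter fun s => #s ≤ k)
      ≤ #((range (k + 1)).biUnion fun j => B.powersetCard j) := by
        refine card_le_card fun s hs => ?_
        simp only [mem_filter, mem_powerset] at hs
        exact mem_biUnion.2 ⟨#s, mem_range.2 (by omega), mem_powersetCard.2 ⟨hs.1, rfl⟩⟩
    _ ≤ ∑ j ∈ range (k + 1), (#B).choose j := by
        simpa only [card_powersetCard] using
          card_biUnion_le (s := range (k + 1)) (t := B.powersetCard)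
    _ ≤ ∑ j ∈ range (k + 1), #B ^ j * 1 ^ (k - j) * k.choose j := by
        refine sum_le_sum fun j hj => ?_
        rw [one_pow, mul_one]
        exact (Nat.choose_le_pow _ _).trans
          (Nat.le_mul_of_pos_right _ (Nat.choose_pos (by simpa [Nat.lt_succ_iff] using hj)))
    _ = (#B + 1) ^ k := (add_pow _ _ _).symm

theorem card_le_of_injOn_of_card_le {F : Finset β} {B : Finset α} {g : β → Finset α} {k : ℕ}
    (hg : ∀ b ∈ F, g b ⊆ B ∧ #(g b) ≤ k) (hinj : Set.InjOn g F) :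
    #F ≤ (#B + 1) ^ k :=
  (card_le_card_of_injOn g (fun b hb => by simpa using hg b hb) hinj).trans
    (card_filter_powerset_card_le B k)

theorem eq_and_eqOn_of_image_graph_eq {γ : Type*} [DecidableEq γ] {s t : Finset α} {f g : α → γ}
    (h : s.image (fun i => (i, f i)) = t.image (fun i => (i, g i))) :
    s = t ∧ Set.EqOn f g s := by
  refine ⟨by simpa [image_image, Function.comp_def] using congrArg (image Prod.fst) h,
    fun i hi => ?_⟩
  obtain ⟨j, -, hj⟩ := mem_image.1 (h ▸ mem_image_of_mem (fun i => (i, f i)) hi)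
  obtain ⟨rfl, hji⟩ := Prod.mk.inj hj
  exact hji.symm

theorem injOn_image_decide_mem (A : Finset α) :
    Set.InjOn (fun ST : Finset α × Finset α => ST.1.image fun i => (i, decide (i ∈ ST.2)))
      {ST | ST.1 ∪ ST.2 = A} := by
  rintro ⟨S, T⟩ (hST : S ∪ T = A) ⟨S', T'⟩ (hST' : S' ∪ T' = A) h
  obtain ⟨rfl, hbits⟩ := eq_and_eqOn_of_image_graph_eq h
  refine Prod.ext rfl (ext fun i => ?_)
  by_cases hi : i ∈ S
  · simpa using hbits hi
  · have hA := congrArg (i ∈ ·) (hST.trans hST'.symm)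
    simpa [hi] using hA

end Counting

def pmul : Fin 4 → Fin 4 → Fin 4 := ![![0,1,2,3],![1,0,3,2],![2,3,0,1],![3,2,1,0]]

def pphase : Fin 4 → Fin 4 → ℂ :=
  ![![1,1,1,1],![1,1,Complex.I,-Complex.I],![1,-Complex.I,1,Complex.I],![1,Complex.I,-Complex.I,1]]

/-- The label of the Pauli proportional to `P·Q`. -/
def pauliProd {n : ℕ} (p q : Fin n → Fin 4) : Fin n → Fin 4 := fun i => pmul (p i) (q i)

theorem pauli1_mul (a b : Fin 4) :
    pauli1 a * pauli1 b = pphase a b • pauli1 (pmul a b) := by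
  fin_cases a <;> fin_cases b <;>
    simp [pauli1, pmul, pphase, Matrix.one_fin_two, Matrix.smul_of, Matrix.smul_cons,
      Matrix.smul_empty, Complex.I_mul_I]

theorem pmul_eq_zero_iff {a b : Fin 4} : pmul a b = 0 ↔ a = b := by revert a b; decide

theorem pmul_comm (a b : Fin 4) : pmul a b = pmul b a := by revert a b; decide

theorem zero_pmul (b : Fin 4) : pmul 0 b = b := by revert b; decide

theorem pphase_self (a : Fin 4) : pphase a a = 1 := by
  fin_cases a <;> simp [pphase]

theorem pphase_comm_of_commute {a b : Fin 4} (h : a = 0 ∨ b = 0 ∨ a = b) :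
    pphase a b = pphase b a := by
  rcases h with rfl | rfl | rfl
  · fin_cases b <;> simp [pphase]
  · fin_cases a <;> simp [pphase]
  · rfl

theorem trace_pauli1 (a : Fin 4) : trace (pauli1 a) = if a = 0 then 2 else 0 := by
  fin_cases a <;> simp [pauli1, Matrix.trace_fin_two]

section PauliMatrices

variable {n : ℕ}

theorem PauliOp_mul (p q : Fin n → Fin 4) :
    PauliOp p * PauliOp q = (∏ i, pphase (p i) (q i)) • PauliOp (pauliProd p q) := by
  ext x y
  calc (PauliOp p * PauliOp q) x y
      = ∑ z : Fin n → Fin 2, ∏ i, pauli1 (p i) (x i) (z i) * pauli1 (q i) (z i) (y i) := by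
        simp [PauliOp, Matrix.mul_apply, prod_mul_distrib]
    _ = ∏ i, (pauli1 (p i) * pauli1 (q i)) (x i) (y i) := by
        rw [← Fintype.prod_sum fun i a => pauli1 (p i) (x i) a * pauli1 (q i) a (y i)]
        simp [Matrix.mul_apply]
    _ = _ := by
        simp [pauli1_mul, PauliOp, pauliProd, prod_mul_distrib]

theorem PauliOp_zero : PauliOp (0 : Fin n → Fin 4) = 1 := by
  ext x y
  simp [PauliOp, pauli1, Matrix.one_apply, prod_boole, funext_iff]

theorem PauliOp_mul_self (p : Fin n → Fin 4) : PauliOp p * PauliOp p = 1 := by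
  have : pauliProd p p = 0 := funext fun i => pmul_eq_zero_iff.2 rfl
  simp [PauliOp_mul, pphase_self, this, PauliOp_zero]

theorem PauliOp_ne_zero (p : Fin n → Fin 4) : PauliOp p ≠ 0 := fun h =>
  one_ne_zero (by simpa [h] using (PauliOp_mul_self p).symm : (1 : QMat n) = 0)

theorem trace_PauliOp_of_ne_zero {p : Fin n → Fin 4} (hp : p ≠ 0) : trace (PauliOp p) = 0 := by
  obtain ⟨i, hi⟩ := Function.ne_iff.1 hp
  have : trace (PauliOp p) = ∏ i, trace (pauli1 (p i)) := by
    simp only [Matrix.trace, Fintype.prod_sum]; rfl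
  rw [this]
  exact prod_eq_zero (mem_univ i) (by simpa [trace_pauli1] using hi)

theorem trace_PauliOp_mul_of_ne {p q : Fin n → Fin 4} (hpq : p ≠ q) :
    trace (PauliOp p * PauliOp q) = 0 := by
  have : pauliProd p q ≠ 0 := fun h =>
    hpq (funext fun i => pmul_eq_zero_iff.1 (congrFun h i))
  rw [PauliOp_mul, trace_smul, trace_PauliOp_of_ne_zero this, smul_zero]

/-- Distinct Paulis are orthogonal for the trace form, hence not proportional. -/
theorem eq_of_smul_PauliOp_eq {p q : Fin n → Fin 4} {a c : ℂ} (hc : c ≠ 0)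
    (h : a • PauliOp p = c • PauliOp q) : p = q := by
  by_contra hpq
  have := congrArg (fun M => trace (M * PauliOp q)) h
  simp only [Matrix.smul_mul, trace_smul, trace_PauliOp_mul_of_ne hpq, PauliOp_mul_self,
    trace_one, Fintype.card_fun, Fintype.card_fin, smul_eq_mul, mul_zero] at this
  exact mul_ne_zero hc (by norm_num) this.symm

theorem cm_PauliOp (p q : Fin n → Fin 4) :
    cm (PauliOp p) (PauliOp q)
      = ((∏ i, pphase (p i) (q i)) - ∏ i, pphase (q i) (p i)) • PauliOp (pauliProd p q) := by
  have : pauliProd q p = pauliProd p q := funext fun i => pmul_comm _ _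
  rw [cm, PauliOp_mul, PauliOp_mul, this, sub_smul]

theorem inCommClass.eq_pauliProd {X P Q : Fin n → Fin 4} (h : inCommClass X P Q) :
    X = pauliProd P Q := by
  have h2i : (2 : ℂ) * Complex.I ≠ 0 := by simp
  rw [inCommClass, cm_PauliOp] at h
  rcases h with h | h
  · exact (eq_of_smul_PauliOp_eq h2i h).symm
  · exact (eq_of_smul_PauliOp_eq (neg_ne_zero.2 h2i) h).symm

theorem not_inCommClass_of_commute {X P Q : Fin n → Fin 4}
    (hPQ : ∀ i, P i = 0 ∨ Q i = 0 ∨ P i = Q i) : ¬ inCommClass X P Q := by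
  have hcm : cm (PauliOp P) (PauliOp Q) = 0 := by
    rw [cm_PauliOp, prod_congr rfl fun i _ => pphase_comm_of_commute (hPQ i), sub_self,
      zero_smul]
  rw [inCommClass, hcm]
  rintro (h | h) <;> simp [eq_comm (a := (0 : QMat n)), PauliOp_ne_zero, Complex.I_ne_zero] at h

end PauliMatrices

section Supports

variable {n : ℕ} {P Q R X : Fin n → Fin 4} {i : Fin n}

theorem mem_psupp : i ∈ psupp P ↔ P i ≠ 0 := by simp [psupp]

theorem pauliProd_apply_of_eq_zero (h : P i = 0) : pauliProd P Q i = Q i := by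
  rw [pauliProd, h, zero_pmul]

theorem eq_of_pauliProd_apply_eq_zero (h : pauliProd P Q i = 0) : P i = Q i :=
  pmul_eq_zero_iff.1 h

theorem psupp_eq_union_of_eq_pauliProd (hX : X = pauliProd P Q) :
    psupp X = psupp P ∩ psupp X ∪ psupp Q ∩ psupp X := by
  refine (union_subset inter_subset_right inter_subset_right).antisymm' fun i hi => ?_
  by_cases hP : P i = 0
  · have : Q i ≠ 0 := by
      simpa [hX, pauliProd_apply_of_eq_zero hP] using mem_psupp.1 hi
    exact mem_union_right _ (mem_inter.2 ⟨mem_psupp.2 this, hi⟩)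
  · exact mem_union_left _ (mem_inter.2 ⟨mem_psupp.2 hP, hi⟩)

/-- Where `X = R·Q` vanishes, `R` agrees with `Q`; so `R` is supported on `supp Q \ supp X`. -/
theorem card_inter_add_card_sdiff_le (hX : X = pauliProd R Q) :
    #(psupp R ∩ psupp X) + #(psupp Q \ psupp X) ≤ #(psupp R) := by
  have hsub : psupp Q \ psupp X ⊆ psupp R := fun i hi => by
    obtain ⟨hQ, hX0⟩ := mem_sdiff.1 hi
    have : R i = Q i := eq_of_pauliProd_apply_eq_zero (by simpa [hX, mem_psupp] using hX0)
    exact mem_psupp.2 (this ▸ mem_psupp.1 hQ)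
  have hdisj : Disjoint (psupp R ∩ psupp X) (psupp Q \ psupp X) :=
    disjoint_of_subset_left inter_subset_right disjoint_sdiff
  rw [← card_union_of_disjoint hdisj]
  exact card_le_card (union_subset inter_subset_left hsub)

end Supports

section Patterns

variable {n k k' : ℕ}

theorem mem_SX {X P Q : Fin n → Fin 4} :
    (P, Q) ∈ SX n k k' X ↔ #(psupp P) ≤ k ∧ #(psupp Q) ≤ k' ∧ inCommClass X P Q := by
  simp [SX]

theorem patternOf_spec {X : Fin n → Fin 4} {ST : Finset (Fin n) × Finset (Fin n)}
    (h : ST ∈ (SX n k k' X).image (patternOf X)) :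
    ST.1 ∪ ST.2 = psupp X ∧ #ST.1 ≤ k ∧ #ST.2 ≤ k' := by
  obtain ⟨⟨P, Q⟩, hPQ, rfl⟩ := mem_image.1 h
  obtain ⟨hP, hQ, hX⟩ := mem_SX.1 hPQ
  exact ⟨(psupp_eq_union_of_eq_pauliProd hX.eq_pauliProd).symm,
    (card_le_card inter_subset_left).trans hP, (card_le_card inter_subset_left).trans hQ⟩

theorem card_patterns_le (X : Fin n → Fin 4) :
    #((SX n k k' X).image (patternOf X)) ≤ (2 * (k + k')) ^ k := by
  set F := (SX n k k' X).image (patternOf X)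
  have hcard : ∀ ST ∈ F, #(ST.1 ∪ ST.2) = #(psupp X) := fun ST hST => by
    rw [(patternOf_spec hST).1]
  rcases F.eq_empty_or_nonempty with hF | ⟨ST₀, hST₀⟩
  · simp [hF]
  have hX : #(psupp X) ≤ k + k' := by
    obtain ⟨-, h₁, h₂⟩ := patternOf_spec hST₀
    exact hcard ST₀ hST₀ ▸ (card_union_le _ _).trans (add_le_add h₁ h₂)
  -- in the tight case `#(supp X) = k + k'` the two halves of a pattern are disjoint
  set bits : Finset Bool := if #(psupp X) < k + k' then univ else {false}
  have hcode : ∀ ST ∈ F, (ST.1.image fun i => (i, decide (i ∈ ST.2))) ⊆ psupp X ×ˢ bits ∧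
      #(ST.1.image fun i => (i, decide (i ∈ ST.2))) ≤ k := by
    intro ST hST
    obtain ⟨hU, h₁, h₂⟩ := patternOf_spec hST
    refine ⟨image_subset_iff.2 fun i hi => mem_product.2 ⟨?_, ?_⟩, card_image_le.trans h₁⟩
    · exact hU ▸ mem_union_left _ hi
    by_cases hlt : #(psupp X) < k + k'
    · simp only [bits, if_pos hlt, mem_univ]
    · have hdisj : Disjoint ST.1 ST.2 :=
        card_union_eq_card_add_card.1 <| by
          have := hcard ST hST
          have := card_union_le ST.1 ST.2
          omega
      simp [bits, hlt, disjoint_left.1 hdisj hi]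
  have hinj := (injOn_image_decide_mem (psupp X)).mono fun ST (hST : ST ∈ F) =>
    (patternOf_spec hST).1
  refine (card_le_of_injOn_of_card_le hcode hinj).trans ?_
  rcases Nat.eq_zero_or_pos k with rfl | hk
  · simp
  refine Nat.pow_le_pow_left ?_ k
  by_cases hlt : #(psupp X) < k + k' <;> simp [bits, hlt] <;> omega

end Patterns

section RelevantClasses

variable {n k k' : ℕ} {P Q Y : Fin n → Fin 4} {S T : Finset (Fin n)}

theorem mem_relevantClasses :
    (Y, S, T) ∈ relevantClasses n k k' P Q ↔
      (∃ R, #(psupp P) ≤ k ∧ #(psupp R) ≤ k' ∧ inCommClass Y P R ∧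
        psupp P ∩ psupp Y = S ∧ psupp R ∩ psupp Y = T) ∧
      (∃ R', #(psupp R') ≤ k ∧ #(psupp Q) ≤ k' ∧ inCommClass Y R' Q ∧
        psupp R' ∩ psupp Y = S ∧ psupp Q ∩ psupp Y = T) := by
  simp [relevantClasses, SX, patternOf, and_assoc]

theorem relevantClasses_eq_empty_of_disjoint (hPQ : Disjoint (psupp P) (psupp Q)) :
    relevantClasses n k k' P Q = ∅ := by
  refine eq_empty_of_forall_notMem ?_
  rintro ⟨Y, S, T⟩ h
  obtain ⟨⟨R, -, -, -, hS, -⟩, R', -, -, hY, hS', -⟩ := mem_relevantClasses.1 h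
  refine not_inCommClass_of_commute (fun i => ?_) hY
  by_cases hQ : Q i = 0
  · exact Or.inr (Or.inl hQ)
  by_cases hYi : Y i = 0
  · exact Or.inr (Or.inr (eq_of_pauliProd_apply_eq_zero (hY.eq_pauliProd ▸ hYi)))
  refine Or.inl (by_contra fun hR' => disjoint_left.1 hPQ ?_ (mem_psupp.2 hQ))
  have : i ∈ S := hS' ▸ mem_inter.2 ⟨mem_psupp.2 hR', mem_psupp.2 hYi⟩
  exact (mem_inter.1 (hS ▸ this)).1

theorem relevantClasses_spec (h : (Y, S, T) ∈ relevantClasses n k k' P Q) :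
    S ⊆ psupp P ∧ T ⊆ psupp Q ∧ psupp Y = S ∪ T ∧ (∀ i ∈ T, i ∉ S → Y i = Q i) ∧
      #S + #(psupp Q \ T) ≤ k := by
  obtain ⟨⟨R, -, -, -, hS, -⟩, R', hR', -, hY, rfl, rfl⟩ := mem_relevantClasses.1 h
  have hY := hY.eq_pauliProd
  refine ⟨?_, inter_subset_left, psupp_eq_union_of_eq_pauliProd hY, fun i hT hS => ?_, ?_⟩
  · exact hS ▸ inter_subset_left
  · have : R' i = 0 := by
      by_contra hR'
      exact hS (mem_inter.2 ⟨mem_psupp.2 hR', (mem_inter.1 hT).2⟩)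
    rw [hY, pauliProd_apply_of_eq_zero this]
  · rw [sdiff_inter_self_left]
    exact (card_inter_add_card_sdiff_le hY).trans hR'

def relevantCode (Q : Fin n → Fin 4) (YST : (Fin n → Fin 4) × Finset (Fin n) × Finset (Fin n)) :
    Finset ((Fin n × Fin 4) ⊕ Fin n) :=
  (YST.2.1.image fun i => (i, YST.1 i)).disjSum (psupp Q \ YST.2.2)

theorem relevantCode_injOn :
    Set.InjOn (relevantCode Q) (relevantClasses n k k' P Q : Set _) := by
  rintro ⟨Y, S, T⟩ h ⟨Y', S', T'⟩ h' hcode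
  obtain ⟨-, hTQ, hY, hYT, -⟩ := relevantClasses_spec h
  obtain ⟨-, hTQ', hY', hYT', -⟩ := relevantClasses_spec h'
  obtain ⟨hgraph, hrest⟩ := disjSum_inj.1 hcode
  obtain ⟨rfl, hYS⟩ := eq_and_eqOn_of_image_graph_eq hgraph
  obtain rfl : T = T' := by
    rw [← Finset.sdiff_sdiff_eq_self hTQ, ← Finset.sdiff_sdiff_eq_self hTQ', hrest]
  refine Prod.ext (funext fun i => ?_) rfl
  by_cases hS : i ∈ S
  · exact hYS hS
  by_cases hT : i ∈ T
  · exact (hYT i hT hS).trans (hYT' i hT hS).symm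
  · have hi : i ∉ S ∪ T := by simp [hS, hT]
    have hYi : i ∉ psupp Y := hY ▸ hi
    have hY'i : i ∉ psupp Y' := hY' ▸ hi
    simp only [mem_psupp, not_not] at hYi hY'i
    exact hYi.trans hY'i.symm

theorem card_relevantClasses_le (hP : #(psupp P) ≤ k) (hQ : #(psupp Q) ≤ k') :
    #(relevantClasses n k k' P Q) ≤ (4 * (k + k')) ^ k := by
  rcases Nat.eq_zero_or_pos k' with rfl | hk'
  · have hQ : psupp Q = ∅ := card_eq_zero.1 (Nat.le_zero.1 hQ)
    simp [relevantClasses_eq_empty_of_disjoint (by simp [hQ] : Disjoint (psupp P) (psupp Q))]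
  have hcode : ∀ YST ∈ relevantClasses n k k' P Q,
      relevantCode Q YST ⊆ (psupp P ×ˢ univ).disjSum (psupp Q) ∧ #(relevantCode Q YST) ≤ k := by
    rintro ⟨Y, S, T⟩ h
    obtain ⟨hSP, -, -, -, hcard⟩ := relevantClasses_spec h
    refine ⟨disjSum_mono (image_subset_iff.2 fun i hi => mem_product.2 ⟨hSP hi, mem_univ _⟩)
      sdiff_subset, ?_⟩
    rw [relevantCode, card_disjSum]
    exact (Nat.add_le_add_right card_image_le _).trans hcard
  refine (card_le_of_injOn_of_card_le hcode relevantCode_injOn).trans (Nat.pow_le_pow_left ?_ k)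
  simp only [card_disjSum, card_product, card_univ, Fintype.card_fin]
  omega

end RelevantClasses

/-- Lemma 3.4: Pauli pattern counting. -/
theorem pauli_pattern_counting (n k k' : ℕ) :
    (∀ X : Fin n → Fin 4,
      ((SX n k k' X).image (patternOf X)).card ≤ (2 * (k + k')) ^ k) ∧
    (∀ P Q : Fin n → Fin 4, (psupp P).card ≤ k → (psupp Q).card ≤ k' →
      (relevantClasses n k k' P Q).card ≤ (4 * (k + k')) ^ k ∧
      (psupp P ∩ psupp Q = ∅ → relevantClasses n k k' P Q = ∅)) :=
  ⟨card_patterns_le, fun _ _ hP hQ => ⟨card_relevantClasses_le hP hQ,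
    fun hPQ => relevantClasses_eq_empty_of_disjoint (disjoint_iff_inter_eq_empty.2 hPQ)⟩⟩
end
end

section
/- Effective sparsity bound for power-law Hamiltonians (Lemma 5.4, with an explicit constant). Let d, k ≥ 1 be integers and α > d a real number. Let x_1,…,x_n be distinct points of ℤ^d with dist(i,j) := ‖x_i − x_j‖₁, and let H = Σ_{a=1}^m λ_a E_a be a k-local Hamiltonian on n qubits exhibiting α-power law decay, i.e. for all i, j ∈ [n]: Σ_{a : i ∈ supp(E_a) and j ∈ supp(E_a)} |λ_a| ≤ 1/max(1, dist(i,j))^α. Then for every ε > 0 with ε·(α−d) ≤ 1, the effective sparsity satisfies 𝔰_ε ≤ 2·6^{(d+1)k} / (ε(α−d))^{dk/(dk+(α−d))}. -/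
open Complex Matrix
open scoped BigOperators Classical

noncomputable section

/-- The effective sparsity `𝔰_ε` of the Hamiltonian with coefficients `lam` and terms `E`:
`max(1, max_i Σ_{a : i ∈ supp(E_a)} min(1, λ_a²/ε²))`. -/
def effSparsity {n m : ℕ} (lam : Fin m → ℝ) (E : Fin m → Fin n → Fin 4) (ε : ℝ) : ℝ :=
  max 1 (⨆ i : Fin n,
    ∑ a ∈ Finset.univ.filter (fun a => i ∈ psupp (E a)), min 1 (lam a ^ 2 / ε ^ 2))

/-!
Fix a qubit `i` and a cutoff radius `R`. A term acting on `i` whose support lies in the `ℓ¹`-ball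
of radius `R` around `x i` contributes at most `1`, and there are at most `(4 (2R+1)^d)^k` such
terms, since a `k`-local Pauli is determined by at most `k` (site, letter) pairs. Every other term
acting on `i` also acts on some site `j` at distance `r > R` and contributes at most `|λ_a|/ε`; by
the decay hypothesis, and since at most `3^d r^(d-1)` sites lie at distance `r`, these add up to at
most `ε⁻¹ Σ_{r>R} 3^d r^(d-1-α) ≤ 3^d R^(d-α) / (ε (α-d))`. The choice
`R = ⌈(ε (α-d))^(-1/(dk+α-d))⌉` balances the two contributions.
-/

open Finset

def l1Norm {d : ℕ} (v : Fin d → ℤ) : ℕ := ∑ r, (v r).natAbs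

section Lattice

variable {d : ℕ}

lemma natAbs_le_l1Norm (v : Fin d → ℤ) (r : Fin d) : (v r).natAbs ≤ l1Norm v :=
  single_le_sum (f := fun r => (v r).natAbs) (fun _ _ => Nat.zero_le _) (mem_univ r)

lemma l1Norm_eq_l1Norm_init_add_natAbs (v : Fin (d + 1) → ℤ) :
    l1Norm v = l1Norm (Fin.init v) + (v (Fin.last d)).natAbs :=
  Fin.sum_univ_castSucc _

lemma card_le_of_forall_l1Norm_le {S : Finset (Fin d → ℤ)} {R : ℕ}
    (hS : ∀ v ∈ S, l1Norm v ≤ R) : S.card ≤ (2 * R + 1) ^ d := by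
  have hsub : S ⊆ Fintype.piFinset fun _ => Icc (-(R : ℤ)) R := by
    intro v hv
    simp only [Fintype.mem_piFinset, mem_Icc]
    intro r
    have := (natAbs_le_l1Norm v r).trans (hS v hv)
    omega
  refine (card_le_card hsub).trans_eq ?_
  simp only [Fintype.card_piFinset, Int.card_Icc, prod_const, card_univ, Fintype.card_fin]
  congr 1
  omega

lemma Int.sign_mem_Icc (z : ℤ) : z.sign ∈ Icc (-1 : ℤ) 1 := by
  rw [mem_Icc]
  rcases z.sign_trichotomy with h | h | h <;> rw [h] <;> decide

lemma card_le_of_forall_l1Norm_eq {S : Finset (Fin (d + 1) → ℤ)} {r : ℕ}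
    (hS : ∀ v ∈ S, l1Norm v = r) : S.card ≤ 3 * (2 * r + 1) ^ d := by
  have hinit : (S.image Fin.init).card ≤ (2 * r + 1) ^ d :=
    card_le_of_forall_l1Norm_le fun w hw => by
      obtain ⟨v, hv, rfl⟩ := mem_image.mp hw
      rw [← hS v hv, l1Norm_eq_l1Norm_init_add_natAbs v]
      omega
  -- on the sphere, the last coordinate is determined by the others up to its sign
  have hinj : Set.InjOn (fun v : Fin (d + 1) → ℤ => (Fin.init v, (v (Fin.last d)).sign)) S := by
    intro v hv w hw hvw
    obtain ⟨hinit, hsign⟩ := Prod.ext_iff.mp hvw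
    dsimp only at hinit hsign
    have habs : (v (Fin.last d)).natAbs = (w (Fin.last d)).natAbs := by
      have hv' := hS v hv
      have hw' := hS w hw
      rw [l1Norm_eq_l1Norm_init_add_natAbs, hinit] at hv'
      rw [l1Norm_eq_l1Norm_init_add_natAbs] at hw'
      omega
    rw [← Fin.snoc_init_self v, ← Fin.snoc_init_self w, ← Int.sign_mul_natAbs (v _),
      ← Int.sign_mul_natAbs (w _), hinit, hsign, habs]
  calc S.card ≤ (S.image Fin.init ×ˢ Icc (-1 : ℤ) 1).card :=
        card_le_card_of_injOn _ (fun v hv => mem_product.mpr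
          ⟨mem_image_of_mem _ hv, Int.sign_mem_Icc _⟩) hinj
    _ ≤ 3 * (2 * r + 1) ^ d := by
        rw [card_product, Int.card_Icc, mul_comm]
        exact Nat.mul_le_mul_left _ hinit

end Lattice

open Real in
lemma sum_Ioc_rpow_neg_le {β : ℝ} (hβ : 0 < β) {R : ℕ} (hR : 0 < R) (M : ℕ) :
    ∑ r ∈ Ioc R M, (r : ℝ) ^ (-(β + 1)) ≤ (R : ℝ) ^ (-β) / β := by
  rcases lt_or_ge M R with hMR | hRM
  · rw [Ioc_eq_empty (by omega), sum_empty]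
    positivity
  have hRpos : (0 : ℝ) < R := by exact_mod_cast hR
  have hanti : AntitoneOn (fun y : ℝ => y ^ (-(β + 1))) (Set.Icc (R : ℝ) M) :=
    fun y hy z _ hyz => rpow_le_rpow_of_nonpos (hRpos.trans_le hy.1) hyz (by linarith)
  have hint : ∫ y in (R : ℝ)..M, y ^ (-(β + 1)) = ((R : ℝ) ^ (-β) - (M : ℝ) ^ (-β)) / β := by
    rw [integral_rpow (Or.inr ⟨by linarith, ?_⟩)]
    · rw [show -(β + 1) + 1 = -β by ring, div_neg, ← neg_div, neg_sub]
    · rw [Set.uIcc_of_le (by exact_mod_cast hRM)]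
      exact fun h => hRpos.not_ge h.1
  calc ∑ r ∈ Ioc R M, (r : ℝ) ^ (-(β + 1))
      = ∑ r ∈ Ico R M, ((r + 1 : ℕ) : ℝ) ^ (-(β + 1)) := by
        rw [sum_Ico_add' (fun r : ℕ => (r : ℝ) ^ (-(β + 1))), Ico_add_one_add_one_eq_Ioc]
    _ ≤ ∫ y in (R : ℝ)..M, y ^ (-(β + 1)) := hanti.sum_le_integral_Ico hRM
    _ ≤ (R : ℝ) ^ (-β) / β := by
        rw [hint]
        gcongr
        linarith [rpow_nonneg (Nat.cast_nonneg M) (-β)]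

open Real in
lemma sum_filter_lt_l1Norm_rpow_neg_le {d : ℕ} (hd : 1 ≤ d) (S : Finset (Fin d → ℤ)) {α : ℝ}
    (hα : (d : ℝ) < α) {R : ℕ} (hR : 0 < R) :
    ∑ v ∈ S with R < l1Norm v, (l1Norm v : ℝ) ^ (-α)
      ≤ 3 ^ d * ((R : ℝ) ^ (-(α - d)) / (α - d)) := by
  obtain ⟨d, rfl⟩ : ∃ d', d = d' + 1 := ⟨d - 1, by omega⟩
  set β := α - ((d + 1 : ℕ) : ℝ) with hβ_def
  have hβ : 0 < β := sub_pos.mpr hα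
  set T := S.filter (R < l1Norm ·)
  set M := T.sup l1Norm
  have hmaps : ∀ v ∈ T, l1Norm v ∈ Ioc R M := fun v hv =>
    mem_Ioc.mpr ⟨(mem_filter.mp hv).2, le_sup hv⟩
  have hfiber : ∀ r ∈ Ioc R M,
      ∑ v ∈ T with l1Norm v = r, (l1Norm v : ℝ) ^ (-α) ≤ 3 ^ (d + 1) * (r : ℝ) ^ (-(β + 1)) := by
    intro r hr
    have hr1 : (1 : ℝ) ≤ r := by exact_mod_cast hR.trans (mem_Ioc.mp hr).1
    have hcard : ((T.filter (l1Norm · = r)).card : ℝ) ≤ 3 * (3 * r) ^ d :=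
      calc ((T.filter (l1Norm · = r)).card : ℝ) ≤ ((3 * (2 * r + 1) ^ d : ℕ) : ℝ) := by
            exact_mod_cast card_le_of_forall_l1Norm_eq fun v hv => (mem_filter.mp hv).2
        _ ≤ 3 * (3 * r) ^ d := by push_cast; gcongr; linarith
    calc ∑ v ∈ T with l1Norm v = r, (l1Norm v : ℝ) ^ (-α)
        = (T.filter (l1Norm · = r)).card * (r : ℝ) ^ (-α) := by
          rw [sum_congr rfl fun v hv => by rw [(mem_filter.mp hv).2], sum_const, nsmul_eq_mul]
      _ ≤ 3 * (3 * r) ^ d * (r : ℝ) ^ (-α) := by gcongr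
      _ = 3 ^ (d + 1) * (r : ℝ) ^ (-(β + 1)) := by
          rw [hβ_def, mul_pow, ← rpow_natCast (r : ℝ) d, Nat.cast_add_one,
            show -(α - (d + 1) + 1) = (d : ℝ) + -α by ring, rpow_add (by linarith)]
          ring
  calc ∑ v ∈ T, (l1Norm v : ℝ) ^ (-α)
      = ∑ r ∈ Ioc R M, ∑ v ∈ T with l1Norm v = r, (l1Norm v : ℝ) ^ (-α) :=
        (sum_fiberwise_of_maps_to hmaps _).symm
    _ ≤ ∑ r ∈ Ioc R M, 3 ^ (d + 1) * (r : ℝ) ^ (-(β + 1)) := sum_le_sum hfiber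
    _ ≤ 3 ^ (d + 1) * ((R : ℝ) ^ (-β) / β) := by
        rw [← mul_sum]
        gcongr
        exact sum_Ioc_rpow_neg_le hβ hR M

lemma Finset.card_le_card_pow_of_forall_mem {α : Type*} [DecidableEq α] {𝒜 : Finset (Finset α)}
    {X : Finset α} {k : ℕ} (h𝒜 : ∀ s ∈ 𝒜, s.Nonempty ∧ s ⊆ X ∧ s.card ≤ k) :
    𝒜.card ≤ X.card ^ k := by
  have hsurj : Set.SurjOn (fun g : Fin k → α => univ.image g)
      (Fintype.piFinset fun _ : Fin k => X) 𝒜 := by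
    intro s hs
    obtain ⟨hne, hsX, hcard⟩ := h𝒜 s hs
    obtain ⟨e⟩ : Nonempty (s ↪ Fin k) :=
      Function.Embedding.nonempty_of_card_le (by simpa using hcard)
    have : Nonempty s := hne.to_subtype
    obtain ⟨g, hg⟩ : ∃ g : Fin k → s, g.Surjective := ⟨_, Function.invFun_surjective e.injective⟩
    refine ⟨fun l => g l, ?_, ?_⟩
    · simpa [Fintype.mem_piFinset] using fun l => hsX (g l).2
    · ext a
      refine ⟨fun ha => ?_, fun ha => ?_⟩
      · obtain ⟨l, -, rfl⟩ := mem_image.mp ha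
        exact (g l).2
      · obtain ⟨l, hl⟩ := hg ⟨a, ha⟩
        exact mem_image.mpr ⟨l, mem_univ _, by simp [hl]⟩
  simpa using card_le_card_of_surjOn _ hsurj

def pauliGraph {n : ℕ} (p : Fin n → Fin 4) : Finset (Fin n × Fin 4) :=
  (psupp p).image fun j => (j, p j)

lemma mem_pauliGraph {n : ℕ} {p : Fin n → Fin 4} {j : Fin n} {c : Fin 4} :
    (j, c) ∈ pauliGraph p ↔ p j ≠ 0 ∧ p j = c := by
  simp [pauliGraph, psupp]

lemma pauliGraph_injective {n : ℕ} : Function.Injective (pauliGraph (n := n)) := by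
  intro p q hpq
  have key : ∀ {p q : Fin n → Fin 4}, pauliGraph p = pauliGraph q → ∀ j, p j ≠ 0 → q j = p j :=
    fun hpq j hj => (mem_pauliGraph.mp (hpq ▸ mem_pauliGraph.mpr ⟨hj, rfl⟩)).2
  funext j
  by_cases hp : p j = 0
  · by_cases hq : q j = 0
    · rw [hp, hq]
    · exact key hpq.symm j hq
  · exact (key hpq j hp).symm

lemma card_le_of_forall_psupp_subset {n k : ℕ} {P : Finset (Fin n → Fin 4)} {B : Finset (Fin n)}
    (hP : ∀ p ∈ P, (psupp p).Nonempty ∧ psupp p ⊆ B ∧ (psupp p).card ≤ k) :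
    P.card ≤ (B.card * 4) ^ k := by
  rw [← card_image_of_injective P pauliGraph_injective]
  have hX : (B ×ˢ (univ : Finset (Fin 4))).card = B.card * 4 := by simp
  refine hX ▸ card_le_card_pow_of_forall_mem fun s hs => ?_
  obtain ⟨p, hp, rfl⟩ := mem_image.mp hs
  obtain ⟨hne, hB, hk⟩ := hP p hp
  refine ⟨hne.image _, fun q hq => ?_, card_image_le.trans hk⟩
  obtain ⟨j, hj, rfl⟩ := mem_image.mp hq
  exact mem_product.mpr ⟨hB hj, mem_univ _⟩

lemma Finset.sum_le_sum_sum_filter_mem {ι κ M : Type*} [AddCommMonoid M] [PartialOrder M]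
    [IsOrderedAddMonoid M] {A : Finset ι} {C : Finset κ} {S : ι → Finset κ} {w : ι → M}
    (hw : ∀ a ∈ A, 0 ≤ w a) (hA : ∀ a ∈ A, ∃ j ∈ C, j ∈ S a) :
    ∑ a ∈ A, w a ≤ ∑ j ∈ C, ∑ a ∈ A with j ∈ S a, w a := by
  rw [sum_comm' (t' := A) (s' := fun a => C.filter (· ∈ S a))
    (fun j a => by simp only [mem_filter]; tauto)]
  refine sum_le_sum fun a ha => ?_
  obtain ⟨j, hjC, hjS⟩ := hA a ha
  exact single_le_sum (f := fun _ => w a) (fun _ _ => hw a ha) (mem_filter.mpr ⟨hjC, hjS⟩)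

lemma min_one_sq_le {z : ℝ} (hz : 0 ≤ z) : min 1 (z ^ 2) ≤ z := by
  rcases le_total z 1 with h | h
  · exact (min_le_right _ _).trans (by nlinarith)
  · exact (min_le_left _ _).trans h

open Real in
lemma exists_cutoff_radius {t β : ℝ} (ht : 0 < t) (ht1 : t ≤ 1) (hβ : 0 < β) (D : ℕ) :
    ∃ R : ℕ, 0 < R ∧ (R : ℝ) ^ D ≤ 2 ^ D / t ^ (D / (D + β))
      ∧ (R : ℝ) ^ (-β) / t ≤ 1 / t ^ (D / (D + β)) := by
  have hDβ : 0 < (D : ℝ) + β := by positivity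
  set s := t ^ (-1 / (D + β)) with hs_def
  have hs : 1 ≤ s := one_le_rpow_of_pos_of_le_one_of_nonpos ht ht1
    (div_nonpos_of_nonpos_of_nonneg (by norm_num) hDβ.le)
  refine ⟨⌈s⌉₊, Nat.ceil_pos.mpr (by linarith), ?_, ?_⟩
  · have hceil : (⌈s⌉₊ : ℝ) ≤ 2 * s := by linarith [Nat.ceil_lt_add_one (zero_le_one.trans hs)]
    calc (⌈s⌉₊ : ℝ) ^ D ≤ (2 * s) ^ D := by gcongr
      _ = 2 ^ D / t ^ (D / (D + β)) := by
        rw [mul_pow, div_eq_mul_inv, ← rpow_neg ht.le, ← rpow_natCast s, hs_def, ← rpow_mul ht.le]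
        congr 2
        field_simp
  · calc (⌈s⌉₊ : ℝ) ^ (-β) / t ≤ s ^ (-β) / t := div_le_div_of_nonneg_right
          (rpow_le_rpow_of_nonpos (by linarith) (Nat.le_ceil s) (by linarith)) ht.le
      _ = 1 / t ^ (D / (D + β)) := by
        rw [hs_def, ← rpow_mul ht.le, one_div, ← rpow_neg ht.le, div_eq_iff ht.ne',
          ← rpow_add_one ht.ne']
        congr 1
        field_simp
        ring

lemma near_add_far_le {d k : ℕ} (hk : 1 ≤ k) {R : ℕ} (hR : 0 < R) {ε β τ : ℝ} (hε : 0 < ε)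
    (hβ : 0 < β) (hτ : 0 < τ) (hnear : (R : ℝ) ^ (d * k) ≤ 2 ^ (d * k) / τ)
    (hfar : (R : ℝ) ^ (-β) / (ε * β) ≤ 1 / τ) :
    (((2 * R + 1) ^ d * 4) ^ k : ℕ) + 3 ^ d * ((R : ℝ) ^ (-β) / β) / ε
      ≤ 2 * 6 ^ ((d + 1) * k) / τ := by
  have hR1 : (1 : ℝ) ≤ R := by exact_mod_cast hR
  have hnear' : ((((2 * R + 1) ^ d * 4) ^ k : ℕ) : ℝ) ≤ 6 ^ ((d + 1) * k) / τ :=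
    calc ((((2 * R + 1) ^ d * 4) ^ k : ℕ) : ℝ) ≤ ((3 * R) ^ d * 4) ^ k := by
          push_cast; gcongr; linarith
      _ = 3 ^ (d * k) * 4 ^ k * (R : ℝ) ^ (d * k) := by ring
      _ ≤ 3 ^ (d * k) * 4 ^ k * (2 ^ (d * k) / τ) := by gcongr
      _ = 6 ^ (d * k) * 4 ^ k / τ := by rw [show (6 : ℝ) = 3 * 2 by norm_num, mul_pow]; ring
      _ ≤ 6 ^ (d * k) * 6 ^ k / τ := by gcongr; norm_num
      _ = 6 ^ ((d + 1) * k) / τ := by ring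
  have hfar' : 3 ^ d * ((R : ℝ) ^ (-β) / β) / ε ≤ 6 ^ ((d + 1) * k) / τ :=
    calc 3 ^ d * ((R : ℝ) ^ (-β) / β) / ε = 3 ^ d * ((R : ℝ) ^ (-β) / (ε * β)) := by
          field_simp
      _ ≤ 6 ^ ((d + 1) * k) * (1 / τ) := by
          gcongr
          exact (pow_le_pow_left₀ (by norm_num) (by norm_num) d).trans
            (pow_le_pow_right₀ (by norm_num) (by nlinarith))
      _ = 6 ^ ((d + 1) * k) / τ := mul_one_div _ _
  calc _ ≤ 6 ^ ((d + 1) * k) / τ + 6 ^ ((d + 1) * k) / τ := add_le_add hnear' hfar'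
    _ = 2 * 6 ^ ((d + 1) * k) / τ := by ring

def HasPowerLawDecay {n m d : ℕ} (x : Fin n → Fin d → ℤ) (lam : Fin m → ℝ)
    (E : Fin m → Fin n → Fin 4) (α : ℝ) : Prop :=
  ∀ i j : Fin n, ∑ a with i ∈ psupp (E a) ∧ j ∈ psupp (E a), |lam a|
    ≤ 1 / (max 1 (l1Norm (x i - x j) : ℝ)) ^ α

def siteBall {n d : ℕ} (x : Fin n → Fin d → ℤ) (i : Fin n) (R : ℕ) : Finset (Fin n) :=
  {j | l1Norm (x i - x j) ≤ R}

section PowerLawHamiltonian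

variable {n m d k : ℕ} {x : Fin n → Fin d → ℤ} {lam : Fin m → ℝ} {E : Fin m → Fin n → Fin 4}

lemma card_filter_l1Norm_sub_le (hx : Function.Injective x) (c : Fin d → ℤ) (R : ℕ) :
    #{j | l1Norm (c - x j) ≤ R} ≤ (2 * R + 1) ^ d := by
  rw [← card_image_of_injective _ ((sub_right_injective (b := c)).comp hx)]
  refine card_le_of_forall_l1Norm_le fun v hv => ?_
  obtain ⟨j, hj, rfl⟩ := mem_image.mp hv
  exact (mem_filter.mp hj).2

lemma card_near_terms_le (hE : Function.Injective E) (hloc : KLocal E k)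
    (hx : Function.Injective x) (i : Fin n) (R : ℕ) :
    #{a | i ∈ psupp (E a) ∧ psupp (E a) ⊆ siteBall x i R} ≤ ((2 * R + 1) ^ d * 4) ^ k := by
  rw [← card_image_of_injective _ hE]
  refine (card_le_of_forall_psupp_subset fun p hp => ?_).trans (by
    gcongr; exact card_filter_l1Norm_sub_le hx (x i) R)
  obtain ⟨a, ha, rfl⟩ := mem_image.mp hp
  obtain ⟨hi, hB⟩ := (mem_filter.mp ha).2
  exact ⟨⟨i, hi⟩, hB, hloc a⟩

lemma sum_abs_far_terms_le (hd : 1 ≤ d) (hx : Function.Injective x) {α : ℝ} (hα : (d : ℝ) < α)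
    (hdecay : HasPowerLawDecay x lam E α) (i : Fin n) {R : ℕ} (hR : 0 < R) :
    ∑ a with i ∈ psupp (E a) ∧ ¬ psupp (E a) ⊆ siteBall x i R, |lam a|
      ≤ 3 ^ d * ((R : ℝ) ^ (-(α - d)) / (α - d)) := by
  calc ∑ a with i ∈ psupp (E a) ∧ ¬ psupp (E a) ⊆ siteBall x i R, |lam a|
      ≤ ∑ j with R < l1Norm (x i - x j),
          ∑ a with i ∈ psupp (E a) ∧ j ∈ psupp (E a), |lam a| := by
        refine (sum_le_sum_sum_filter_mem (S := fun a => psupp (E a)) (fun _ _ => abs_nonneg _)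
          fun a ha => ?_).trans (sum_le_sum fun j _ => sum_le_sum_of_subset_of_nonneg ?_
            fun _ _ _ => abs_nonneg _)
        · obtain ⟨j, hj, hjB⟩ := not_subset.mp (mem_filter.mp ha).2.2
          exact ⟨j, by simpa [siteBall] using hjB, hj⟩
        · intro a ha
          simp only [mem_filter, mem_univ, true_and] at ha ⊢
          exact ⟨ha.1.1, ha.2⟩
    _ ≤ ∑ j with R < l1Norm (x i - x j), (l1Norm (x i - x j) : ℝ) ^ (-α) := by
        refine sum_le_sum fun j hj => (hdecay i j).trans_eq ?_
        have hj1 : (1 : ℝ) ≤ l1Norm (x i - x j) := by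
          exact_mod_cast hR.trans (mem_filter.mp hj).2
        rw [max_eq_right hj1, Real.rpow_neg (by positivity), one_div]
    _ = ∑ v ∈ univ.image (x i - x ·) with R < l1Norm v, (l1Norm v : ℝ) ^ (-α) := by
        rw [filter_image, sum_image fun j _ j' _ h => hx (sub_right_injective h)]
    _ ≤ 3 ^ d * ((R : ℝ) ^ (-(α - d)) / (α - d)) :=
        sum_filter_lt_l1Norm_rpow_neg_le hd _ hα hR

lemma sum_min_sq_div_sq_le (hE : Function.Injective E) (hloc : KLocal E k) (hd : 1 ≤ d)
    (hx : Function.Injective x) {α : ℝ} (hα : (d : ℝ) < α) (hdecay : HasPowerLawDecay x lam E α)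
    {ε : ℝ} (hε : 0 < ε) (i : Fin n) {R : ℕ} (hR : 0 < R) :
    ∑ a with i ∈ psupp (E a), min 1 (lam a ^ 2 / ε ^ 2)
      ≤ (((2 * R + 1) ^ d * 4) ^ k : ℕ) + 3 ^ d * ((R : ℝ) ^ (-(α - d)) / (α - d)) / ε := by
  rw [← sum_filter_add_sum_filter_not _ (fun a => psupp (E a) ⊆ siteBall x i R), filter_filter,
    filter_filter]
  gcongr ?_ + ?_
  · calc _ ≤ ∑ a with i ∈ psupp (E a) ∧ psupp (E a) ⊆ siteBall x i R, (1 : ℝ) :=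
          sum_le_sum fun _ _ => min_le_left _ _
      _ ≤ _ := by
          rw [sum_const, nsmul_one]
          exact_mod_cast card_near_terms_le hE hloc hx i R
  · calc _ ≤ ∑ a with i ∈ psupp (E a) ∧ ¬ psupp (E a) ⊆ siteBall x i R, |lam a| / ε :=
          sum_le_sum fun a _ => by
            rw [← sq_abs, ← div_pow]
            exact min_one_sq_le (by positivity)
      _ ≤ _ := by
          rw [← sum_div]
          gcongr
          exact sum_abs_far_terms_le hd hx hα hdecay i hR

end PowerLawHamiltonian

/-- Lemma 5.4, with an explicit constant: effective sparsity bound for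
power-law Hamiltonians on (an embedded copy of) the lattice `ℤ^d`, with `ℓ¹` distance. -/
theorem power_law_effective_sparsity (d k : ℕ) (hd : 1 ≤ d) (hk : 1 ≤ k)
    (α : ℝ) (hα : (d : ℝ) < α)
    (n m : ℕ) (x : Fin n → Fin d → ℤ) (hx : Function.Injective x)
    (lam : Fin m → ℝ) (E : Fin m → Fin n → Fin 4) (H : QMat n)
    (hH : IsHamiltonian lam E H) (hloc : KLocal E k)
    (hdecay : ∀ i j : Fin n,
      (∑ a ∈ Finset.univ.filter (fun a => i ∈ psupp (E a) ∧ j ∈ psupp (E a)), |lam a|)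
        ≤ 1 / (max 1 ((∑ r, (x i r - x j r).natAbs : ℕ) : ℝ)) ^ α)
    (ε : ℝ) (hε : 0 < ε) (hε1 : ε * (α - (d : ℝ)) ≤ 1) :
    effSparsity lam E ε
      ≤ 2 * 6 ^ ((d + 1) * k) /
          (ε * (α - (d : ℝ))) ^ (((d * k : ℕ) : ℝ) / ((d * k : ℕ) + (α - (d : ℝ)))) := by
  have hβ : 0 < α - d := sub_pos.mpr hα
  obtain ⟨R, hR, hnear, hfar⟩ := exists_cutoff_radius (mul_pos hε hβ) hε1 hβ (d * k)
  have hbound := near_add_far_le hk hR hε hβ (by positivity) hnear hfar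
  have hone : (1 : ℝ) ≤ (((2 * R + 1) ^ d * 4) ^ k : ℕ)
      + 3 ^ d * ((R : ℝ) ^ (-(α - d)) / (α - d)) / ε :=
    le_add_of_le_of_nonneg (Nat.one_le_cast.mpr (Nat.pos_of_ne_zero (by positivity)))
      (by positivity)
  exact max_le (hone.trans hbound) (Real.iSup_le (fun i =>
    (sum_min_sq_div_sq_le hH.1 hloc hd hx hα hdecay hε i hR).trans hbound) (by positivity))
end
end
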